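/- arXiv:2405.20262 — 6 statements merged into one kernel-verified Lean document; each statement's English description precedes it below -/
import Mathlib

section
/- The Demazure operators on Pol_n satisfy the braid relation ∂_r ∂_{r+1} ∂_r = ∂_{r+1} ∂_r ∂_{r+1} for all 1 ≤ r ≤ n-2, and the commutation relation ∂_r ∂_t = ∂_t ∂_r whenever |r - t| > 1. -/
/-!
The relation `(X i - X j) * Q = P - s P` defining `Q = ∂ P` for the transposition `s = (i j)`
transports along any renaming of the variables, and forces `s Q = Q`. With these two facts,
`(X i - X j) (X i - X l) (X j - X l) · ∂_s ∂_t ∂_s P` for `s = (i j)`, `t = (j l)` expands to the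
alternating sum `P - sP - tP + stP + tsP - stsP` over `S₃`; the same computation for
`∂_t ∂_s ∂_t P` gives the same sum with `tst` in place of `sts`, and `sts = tst`. Likewise
`(X i - X j) (X u - X v) · ∂_s ∂_τ P = P - τP - sP + sτP` for disjoint transpositions, which
is symmetric in `s, τ` since they commute. The products of linear forms are nonzero, so they
cancel in the domain `k[X]`.
-/

open MvPolynomial Equiv

namespace Equiv

variable {σ : Type*} [DecidableEq σ] {i j l u v : σ}

theorem swap_mul_swap_mul_swap_braid (hij : i ≠ j) (hil : i ≠ l) (hjl : j ≠ l) :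
    swap i j * swap j l * swap i j = swap j l * swap i j * swap j l := by
  rw [swap_mul_swap_mul_swap hij hil, swap_comm i j, swap_comm j l,
    swap_mul_swap_mul_swap hjl.symm hil.symm, swap_comm]

theorem swap_mul_swap_comm (hiu : i ≠ u) (hiv : i ≠ v) (hju : j ≠ u) (hjv : j ≠ v) :
    swap i j * swap u v = swap u v * swap i j := by
  rw [← mul_inv_eq_iff_eq_mul, ← swap_apply_apply, swap_apply_of_ne_of_ne hiu.symm hju.symm,
    swap_apply_of_ne_of_ne hiv.symm hjv.symm]

end Equiv

namespace MvPolynomial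

variable {σ R : Type*} [CommRing R] {i j l u v : σ} {P Q A B C A' B' C' : MvPolynomial σ R}

theorem X_sub_X_ne_zero [Nontrivial R] (h : i ≠ j) : (X i - X j : MvPolynomial σ R) ≠ 0 :=
  sub_ne_zero.mpr fun e => h (X_injective e)

variable [DecidableEq σ]

def IsDivDiff (i j : σ) (P Q : MvPolynomial σ R) : Prop :=
  (X i - X j) * Q = P - rename (swap i j) P

theorem rename_swap_rename_swap (i j : σ) (P : MvPolynomial σ R) :
    rename (swap i j) (rename (swap i j) P) = P := by
  rw [rename_rename, ← Perm.coe_mul, swap_mul_self, Perm.coe_one, rename_id, AlgHom.id_apply]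

namespace IsDivDiff

theorem rename_eq {τ : Type*} (h : IsDivDiff i j P Q) (f : σ → τ) :
    (X (f i) - X (f j)) * rename f Q = rename f P - rename f (rename (swap i j) P) := by
  simpa only [map_mul, map_sub, rename_X] using congrArg (rename f) h

theorem symm (h : IsDivDiff i j P Q) : IsDivDiff j i P (-Q) := by
  unfold IsDivDiff at *
  rw [swap_comm]
  linear_combination h

theorem neg (h : IsDivDiff i j P Q) : IsDivDiff i j (-P) (-Q) := by
  unfold IsDivDiff at *
  rw [map_neg]
  linear_combination -h

theorem rename_swap [IsDomain R] (hij : i ≠ j) (h : IsDivDiff i j P Q) :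
    rename (swap i j) Q = Q := by
  have hs := h.rename_eq (swap i j)
  rw [swap_apply_left, swap_apply_right, rename_swap_rename_swap] at hs
  unfold IsDivDiff at h
  exact mul_left_cancel₀ (X_sub_X_ne_zero hij) (by linear_combination -hs - h)

theorem mul_mul_of_disjoint (hiu : i ≠ u) (hiv : i ≠ v) (hju : j ≠ u) (hjv : j ≠ v)
    (hA : IsDivDiff u v P A) (hB : IsDivDiff i j A B) :
    (X i - X j) * (X u - X v) * B =
      P - rename (swap u v) P - rename (swap i j) P +
        rename (swap i j) (rename (swap u v) P) := by
  have hsA := hA.rename_eq (swap i j)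
  rw [swap_apply_of_ne_of_ne hiu.symm hju.symm, swap_apply_of_ne_of_ne hiv.symm hjv.symm] at hsA
  unfold IsDivDiff at hA hB
  linear_combination (X u - X v) * hB + hA - hsA

theorem mul_mul_mul_braid [IsDomain R] (hij : i ≠ j) (hil : i ≠ l) (hjl : j ≠ l)
    (hA : IsDivDiff i j P A) (hB : IsDivDiff j l A B) (hC : IsDivDiff i j B C) :
    (X i - X j) * (X i - X l) * (X j - X l) * C =
      P - rename (swap i j) P - rename (swap j l) P +
        rename (swap i j) (rename (swap j l) P) + rename (swap j l) (rename (swap i j) P) -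
          rename (swap i j) (rename (swap j l) (rename (swap i j) P)) := by
  have hsA := hA.rename_swap hij
  have hsB := hB.rename_eq (swap i j)
  have htA := hA.rename_eq (swap j l)
  rw [swap_apply_right, swap_apply_of_ne_of_ne hil.symm hjl.symm] at hsB
  rw [swap_apply_of_ne_of_ne hij hil, swap_apply_left] at htA
  have hstA := congrArg (rename (swap i j)) htA
  simp only [map_mul, map_sub, rename_X, swap_apply_left,
    swap_apply_of_ne_of_ne hil.symm hjl.symm] at hstA
  unfold IsDivDiff at hA hB hC
  linear_combination (X i - X l) * (X j - X l) * hC + (X i - X l) * hB - (X j - X l) * hsB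
    - (X j - X l) * hsA - htA + hstA + hA

theorem braid [IsDomain R] (hij : i ≠ j) (hil : i ≠ l) (hjl : j ≠ l)
    (hA : IsDivDiff i j P A) (hB : IsDivDiff j l A B) (hC : IsDivDiff i j B C)
    (hA' : IsDivDiff j l P A') (hB' : IsDivDiff i j A' B') (hC' : IsDivDiff j l B' C') :
    C = C' := by
  have h := mul_mul_mul_braid hij hil hjl hA hB hC
  -- `∂_t ∂_s ∂_t` is the same pattern for the triple `(l, j, i)`, with every orientation reversed.
  have hB'_rev := hB'.neg.symm
  rw [neg_neg] at hB'_rev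
  have h' := mul_mul_mul_braid hjl.symm hil.symm hij.symm hA'.symm hB'_rev hC'.symm
  rw [swap_comm l j, swap_comm j i] at h'
  have hsts : rename (swap i j) (rename (swap j l) (rename (swap i j) P)) =
      rename (swap j l) (rename (swap i j) (rename (swap j l) P)) := by
    simp only [rename_rename, ← Perm.coe_mul, ← mul_assoc,
      swap_mul_swap_mul_swap_braid hij hil hjl]
  refine mul_left_cancel₀ (mul_ne_zero (mul_ne_zero (X_sub_X_ne_zero hij)
    (X_sub_X_ne_zero hil)) (X_sub_X_ne_zero hjl)) ?_
  linear_combination h - h' - hsts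

theorem comm_of_disjoint [IsDomain R] (hij : i ≠ j) (huv : u ≠ v)
    (hiu : i ≠ u) (hiv : i ≠ v) (hju : j ≠ u) (hjv : j ≠ v)
    (hA : IsDivDiff u v P A) (hB : IsDivDiff i j A B)
    (hA' : IsDivDiff i j P A') (hB' : IsDivDiff u v A' B') : B = B' := by
  have h := mul_mul_of_disjoint hiu hiv hju hjv hA hB
  have h' := mul_mul_of_disjoint hiu.symm hju.symm hiv.symm hjv.symm hA' hB'
  have hcomm : rename (swap i j) (rename (swap u v) P) =
      rename (swap u v) (rename (swap i j) P) := by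
    simp only [rename_rename, ← Perm.coe_mul, swap_mul_swap_comm hiu hiv hju hjv]
  refine mul_left_cancel₀ (mul_ne_zero (X_sub_X_ne_zero hij) (X_sub_X_ne_zero huv)) ?_
  linear_combination h - h' + hcomm

end IsDivDiff

end MvPolynomial

/-- The Demazure operators `∂_r` on `Pol_n = k[X_1,...,X_n]` (characterized by
`(X_r - X_{r+1}) · ∂_r P = P - s_r P`) satisfy the braid relations
`∂_r ∂_{r+1} ∂_r = ∂_{r+1} ∂_r ∂_{r+1}` and commute when `|r - t| > 1`. -/
theorem stmt_1 (k : Type) [Field k] (n : ℕ)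
    (D : ∀ r : ℕ, r + 1 < n → (MvPolynomial (Fin n) k →ₗ[k] MvPolynomial (Fin n) k))
    (hD : ∀ (r : ℕ) (hr : r + 1 < n) (P : MvPolynomial (Fin n) k),
      (X (⟨r, Nat.lt_of_succ_lt hr⟩ : Fin n) - X (⟨r + 1, hr⟩ : Fin n)) * D r hr P =
        P - rename (⇑(Equiv.swap (⟨r, Nat.lt_of_succ_lt hr⟩ : Fin n)
            (⟨r + 1, hr⟩ : Fin n))) P) :
    (∀ (r : ℕ) (hr : r + 2 < n) (P : MvPolynomial (Fin n) k),
      D r (Nat.lt_of_succ_lt hr) (D (r + 1) hr (D r (Nat.lt_of_succ_lt hr) P)) =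
        D (r + 1) hr (D r (Nat.lt_of_succ_lt hr) (D (r + 1) hr P))) ∧
    (∀ (r t : ℕ) (hr : r + 1 < n) (ht : t + 1 < n), (r + 1 < t ∨ t + 1 < r) →
      ∀ P : MvPolynomial (Fin n) k, D r hr (D t ht P) = D t ht (D r hr P)) := by
  have hD' : ∀ r hr P, IsDivDiff (⟨r, Nat.lt_of_succ_lt hr⟩ : Fin n) ⟨r + 1, hr⟩ P (D r hr P) :=
    hD
  have hne {a b : ℕ} {ha : a < n} {hb : b < n} (h : a ≠ b) : (⟨a, ha⟩ : Fin n) ≠ ⟨b, hb⟩ :=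
    Fin.ne_of_val_ne h
  constructor
  · intro r hr P
    exact IsDivDiff.braid (hne (by omega)) (hne (by omega)) (hne (by omega))
      (hD' _ _ _) (hD' _ _ _) (hD' _ _ _) (hD' _ _ _) (hD' _ _ _) (hD' _ _ _)
  · intro r t hr ht hrt P
    exact IsDivDiff.comm_of_disjoint (hne (by omega)) (hne (by omega)) (hne (by omega))
      (hne (by omega)) (hne (by omega)) (hne (by omega))
      (hD' _ _ _) (hD' _ _ _) (hD' _ _ _) (hD' _ _ _)
end

section
/- Define an S_n-action on EPol_n = Pol_n ⊗ Λ(ω_1,...,ω_n) by algebra automorphisms extending the permutation action on Pol_n, where s_r(ω_i) = ω_i for i ≠ r and s_r(ω_r) = ω_r + (X_r - X_{r+1})ω_{r+1}. Then this indeed defines a group action: the operators s_r satisfy s_r² = id, the braid relations s_r s_{r+1} s_r = s_{r+1} s_r s_{r+1}, and s_r s_t = s_t s_r for |r-t| > 1. -/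
open MvPolynomial
open scoped TensorProduct

noncomputable section

/-- `EPol k n = Pol_n ⊗ Λ(ω_1,...,ω_n)`. -/
abbrev EPol (k : Type) [Field k] (n : ℕ) :=
  TensorProduct k (MvPolynomial (Fin n) k) (ExteriorAlgebra k (Fin n → k))

/-- The element `X_i` of `EPol`. -/
def XE (k : Type) [Field k] (n : ℕ) (i : Fin n) : EPol k n := (X i) ⊗ₜ[k] 1

/-- The exterior generator `ω_i` of `EPol`. -/
def wE (k : Type) [Field k] (n : ℕ) (i : Fin n) : EPol k n :=
  1 ⊗ₜ[k] (ExteriorAlgebra.ι k (Pi.single i (1 : k)))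

def fr (n r : ℕ) (hr : r + 1 < n) : Fin n := ⟨r, Nat.lt_of_succ_lt hr⟩
def fr1 (n r : ℕ) (hr : r + 1 < n) : Fin n := ⟨r + 1, hr⟩

lemma epol_ext {k : Type} [Field k] {n : ℕ} {f g : EPol k n →ₐ[k] EPol k n}
    (hX : ∀ i, f (XE k n i) = g (XE k n i))
    (hw : ∀ i, f (wE k n i) = g (wE k n i)) : f = g := by
  apply Algebra.TensorProduct.ext
  · apply MvPolynomial.algHom_ext
    intro i
    simpa [XE] using hX i
  · apply ExteriorAlgebra.hom_ext
    apply LinearMap.ext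
    intro m
    have hm : m = ∑ i, m i • (Pi.single i (1 : k) : Fin n → k) := by
      ext j; simp [Pi.single_apply]
    have hι : ExteriorAlgebra.ι k m = ∑ i, m i • ExteriorAlgebra.ι k (Pi.single i (1:k)) := by
      conv_lhs => rw [hm]
      simp
    simp only [hι, map_sum, map_smul, LinearMap.comp_apply, AlgHom.toLinearMap_apply,
      AlgHom.coe_comp, Function.comp_apply, AlgHom.coe_restrictScalars',
      Algebra.TensorProduct.includeRight_apply]
    exact Finset.sum_congr rfl fun i _ => by
      rw [show (1:MvPolynomial (Fin n) k) ⊗ₜ[k] ExteriorAlgebra.ι k (Pi.single i (1:k))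
        = wE k n i from rfl, hw]

lemma XE_commute {k : Type} [Field k] {n : ℕ} (i j : Fin n) :
    Commute (XE k n i) (XE k n j) := by
  show _ = _
  simp [XE, Algebra.TensorProduct.tmul_mul_tmul, mul_comm]

lemma swap3 {α : Type*} [DecidableEq α] {a b c : α} (hab : a ≠ b) (hac : a ≠ c) (hbc : b ≠ c)
    (i : α) : Equiv.swap a b (Equiv.swap b c (Equiv.swap a b i)) = Equiv.swap a c i := by
  have key : Equiv.swap a b * Equiv.swap b c * Equiv.swap a b = Equiv.swap a c := by
    have h := Equiv.swap_apply_apply (Equiv.swap a b) b c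
    rw [Equiv.swap_apply_right, Equiv.swap_apply_of_ne_of_ne (Ne.symm hac) (Ne.symm hbc)] at h
    rw [h, Equiv.swap_inv]
  calc Equiv.swap a b (Equiv.swap b c (Equiv.swap a b i))
      = (Equiv.swap a b * Equiv.swap b c * Equiv.swap a b) i := rfl
    _ = Equiv.swap a c i := by rw [key]

section aux
variable {k : Type} [Field k] {n : ℕ}

lemma invol_aux (f : EPol k n →ₐ[k] EPol k n) (a b : Fin n) (hab : a ≠ b)
    (hfX : ∀ i, f (XE k n i) = XE k n (Equiv.swap a b i))
    (hfw : ∀ i, i ≠ a → f (wE k n i) = wE k n i)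
    (hfwa : f (wE k n a) = wE k n a + (XE k n a - XE k n b) * wE k n b) :
    f.comp f = AlgHom.id k (EPol k n) := by
  apply epol_ext
  · intro i; simp [hfX, Equiv.swap_apply_self]
  · intro i
    rcases eq_or_ne i a with h | hi
    · rw [h]
      simp only [AlgHom.comp_apply, AlgHom.id_apply, hfwa, map_add, map_mul, map_sub, hfX,
        hfw b hab.symm, Equiv.swap_apply_left, Equiv.swap_apply_right, sub_mul]
      abel
    · simp [AlgHom.comp_apply, hfw i hi]

set_option synthInstance.maxHeartbeats 1000000 in
set_option maxHeartbeats 2000000 in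
lemma braid_aux (f g : EPol k n →ₐ[k] EPol k n) (a b c : Fin n)
    (hab : a ≠ b) (hac : a ≠ c) (hbc : b ≠ c)
    (hfX : ∀ i, f (XE k n i) = XE k n (Equiv.swap a b i))
    (hfw : ∀ i, i ≠ a → f (wE k n i) = wE k n i)
    (hfwa : f (wE k n a) = wE k n a + (XE k n a - XE k n b) * wE k n b)
    (hgX : ∀ i, g (XE k n i) = XE k n (Equiv.swap b c i))
    (hgw : ∀ i, i ≠ b → g (wE k n i) = wE k n i)
    (hgwb : g (wE k n b) = wE k n b + (XE k n b - XE k n c) * wE k n c) :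
    f.comp (g.comp f) = g.comp (f.comp g) := by
  have sab_c : Equiv.swap a b c = c := Equiv.swap_apply_of_ne_of_ne hac.symm hbc.symm
  have sbc_a : Equiv.swap b c a = a := Equiv.swap_apply_of_ne_of_ne hab hac
  apply epol_ext
  · intro i
    simp only [AlgHom.comp_apply, hfX, hgX]
    rw [swap3 hab hac hbc i]
    rw [show Equiv.swap b c (Equiv.swap a b (Equiv.swap b c i)) = Equiv.swap a c i from by
      rw [Equiv.swap_comm b c, Equiv.swap_comm a b, swap3 hbc.symm (Ne.symm hac) hab.symm i,
        Equiv.swap_comm]]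
  · intro i
    rcases eq_or_ne i a with h | hia
    · rw [h]
      have hC : (XE k n b - XE k n c) * (XE k n a - XE k n c) =
          (XE k n a - XE k n c) * (XE k n b - XE k n c) :=
        ((((XE_commute a b).sub_left (XE_commute c b)).sub_right
          ((XE_commute a c).sub_left (XE_commute c c))).eq).symm
      simp only [AlgHom.comp_apply, hfwa, hgwb, hfw b hab.symm, hfw c hac.symm,
        hgw a hab, hgw c hbc.symm, map_add, map_mul, map_sub, hfX, hgX,
        Equiv.swap_apply_left, Equiv.swap_apply_right, sab_c, sbc_a]
      simp only [mul_add]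
      rw [← mul_assoc (XE k n b - XE k n c) (XE k n a - XE k n c), hC,
        mul_assoc (XE k n a - XE k n c) (XE k n b - XE k n c)]
      simp only [sub_mul]
      abel
    · rcases eq_or_ne i b with h | hib
      · rw [h]
        simp only [AlgHom.comp_apply, hfwa, hgwb, hfw b hab.symm, hfw c hac.symm,
          hgw a hab, hgw c hbc.symm, map_add, map_mul, map_sub, hfX, hgX,
          Equiv.swap_apply_left, Equiv.swap_apply_right, sab_c, sbc_a]
        simp only [sub_mul]
        abel
      · rcases eq_or_ne i c with h | hic
        · rw [h]
          simp only [AlgHom.comp_apply, hfw c hac.symm, hgw c hbc.symm]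
        · simp only [AlgHom.comp_apply, hfw i hia, hgw i hib]

lemma comm_aux (f g : EPol k n →ₐ[k] EPol k n) (a b c d : Fin n)
    (hac : a ≠ c) (had : a ≠ d) (hbc : b ≠ c) (hbd : b ≠ d)
    (hfX : ∀ i, f (XE k n i) = XE k n (Equiv.swap a b i))
    (hfw : ∀ i, i ≠ a → f (wE k n i) = wE k n i)
    (hfwa : f (wE k n a) = wE k n a + (XE k n a - XE k n b) * wE k n b)
    (hgX : ∀ i, g (XE k n i) = XE k n (Equiv.swap c d i))
    (hgw : ∀ i, i ≠ c → g (wE k n i) = wE k n i)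
    (hgwc : g (wE k n c) = wE k n c + (XE k n c - XE k n d) * wE k n d) :
    f.comp g = g.comp f := by
  have scd : ∀ i : Fin n, i ≠ c → i ≠ d → Equiv.swap c d i = i := fun i h1 h2 =>
    Equiv.swap_apply_of_ne_of_ne h1 h2
  have sab : ∀ i : Fin n, i ≠ a → i ≠ b → Equiv.swap a b i = i := fun i h1 h2 =>
    Equiv.swap_apply_of_ne_of_ne h1 h2
  apply epol_ext
  · intro i
    simp only [AlgHom.comp_apply, hfX, hgX]
    congr 1
    rcases eq_or_ne i a with h | hia
    · rw [h]
      simp only [scd a hac had, Equiv.swap_apply_left, scd b hbc hbd]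
    rcases eq_or_ne i b with h | hib
    · rw [h]
      simp only [scd b hbc hbd, Equiv.swap_apply_right, scd a hac had]
    rcases eq_or_ne i c with h | hic
    · rw [h]
      simp only [sab c hac.symm hbc.symm, Equiv.swap_apply_left, sab d had.symm hbd.symm]
    rcases eq_or_ne i d with h | hid
    · rw [h]
      simp only [sab d had.symm hbd.symm, Equiv.swap_apply_right, sab c hac.symm hbc.symm]
    · simp only [sab i hia hib, scd i hic hid]
  · intro i
    rcases eq_or_ne i a with h | hia
    · rw [h]
      simp only [AlgHom.comp_apply, hgw a hac, hfwa, map_add, map_mul, map_sub,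
        hgX, hgw b hbc, scd a hac had, scd b hbc hbd]
    rcases eq_or_ne i c with h | hic
    · rw [h]
      simp only [AlgHom.comp_apply, hfw c hac.symm, hgwc, map_add, map_mul, map_sub,
        hfX, hfw d had.symm, sab c hac.symm hbc.symm, sab d had.symm hbd.symm]
    · simp only [AlgHom.comp_apply, hfw i hia, hgw i hic]

end aux

/-- The `S_n`-action on `EPol_n` by algebra automorphisms, extending the permutation action
on `Pol_n` and with `s_r(ω_i) = ω_i` for `i ≠ r`,
`s_r(ω_r) = ω_r + (X_r - X_{r+1})ω_{r+1}`, indeed defines a group action: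
`s_r² = id`, the braid relations, and commutation for distant indices. -/
theorem stmt_4 (k : Type) [Field k] (n : ℕ)
    (σ : ∀ r : ℕ, r + 1 < n → (EPol k n →ₐ[k] EPol k n))
    (hσX : ∀ (r : ℕ) (hr : r + 1 < n) (i : Fin n),
      σ r hr (XE k n i) = XE k n (Equiv.swap (fr n r hr) (fr1 n r hr) i))
    (hσω : ∀ (r : ℕ) (hr : r + 1 < n) (i : Fin n),
      i ≠ fr n r hr → σ r hr (wE k n i) = wE k n i)
    (hσωr : ∀ (r : ℕ) (hr : r + 1 < n),
      σ r hr (wE k n (fr n r hr)) =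
        wE k n (fr n r hr) + (XE k n (fr n r hr) - XE k n (fr1 n r hr)) * wE k n (fr1 n r hr)) :
    (∀ (r : ℕ) (hr : r + 1 < n) (x : EPol k n), σ r hr (σ r hr x) = x) ∧
    (∀ (r : ℕ) (hr : r + 2 < n) (x : EPol k n),
      σ r (Nat.lt_of_succ_lt hr) (σ (r + 1) hr (σ r (Nat.lt_of_succ_lt hr) x)) =
        σ (r + 1) hr (σ r (Nat.lt_of_succ_lt hr) (σ (r + 1) hr x))) ∧
    (∀ (r t : ℕ) (hr : r + 1 < n) (ht : t + 1 < n), (r + 1 < t ∨ t + 1 < r) →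
      ∀ x : EPol k n, σ r hr (σ t ht x) = σ t ht (σ r hr x)) := by
  refine ⟨?_, ?_, ?_⟩
  · intro r hr x
    have key := invol_aux (σ r hr) (fr n r hr) (fr1 n r hr)
      (Fin.ne_of_val_ne (show r ≠ r + 1 by omega))
      (hσX r hr) (hσω r hr) (hσωr r hr)
    simpa using AlgHom.congr_fun key x
  · intro r hr x
    have h1 : r + 1 < n := Nat.lt_of_succ_lt hr
    have key := braid_aux (σ r h1) (σ (r+1) hr) (fr n r h1) (fr1 n r h1) (fr1 n (r+1) hr)
      (Fin.ne_of_val_ne (show r ≠ r + 1 by omega))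
      (Fin.ne_of_val_ne (show r ≠ r + 2 by omega))
      (Fin.ne_of_val_ne (show r + 1 ≠ r + 2 by omega))
      (hσX r h1) (hσω r h1) (hσωr r h1)
      (hσX (r+1) hr) (hσω (r+1) hr) (hσωr (r+1) hr)
    simpa using AlgHom.congr_fun key x
  · intro r t hr ht hrt x
    have key := comm_aux (σ r hr) (σ t ht) (fr n r hr) (fr1 n r hr) (fr n t ht) (fr1 n t ht)
      (Fin.ne_of_val_ne (show r ≠ t by omega))
      (Fin.ne_of_val_ne (show r ≠ t + 1 by omega))
      (Fin.ne_of_val_ne (show r + 1 ≠ t by omega))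
      (Fin.ne_of_val_ne (show r + 1 ≠ t + 1 by omega))
      (hσX r hr) (hσω r hr) (hσωr r hr)
      (hσX t ht) (hσω t ht) (hσωr t ht)
    simpa using AlgHom.congr_fun key x
end
end

section
/- In End(EPol_n), the element ω_r + X_r·ω_{r+1} (multiplication operator) commutes with the extended Demazure operator ∂_r, i.e. [∂_r, ω_r + X_r ω_{r+1}] = 0. -/
open MvPolynomial
open scoped TensorProduct

noncomputable section

/-- In `End(EPol_n)`, the left-multiplication operator by `ω_r + X_r·ω_{r+1}` commutes
with the extended Demazure operator `∂_r`: `[∂_r, ω_r + X_r ω_{r+1}] = 0`. -/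
theorem stmt_6 (k : Type) [Field k] (n r : ℕ) (hr : r + 1 < n)
    (σ : EPol k n →ₐ[k] EPol k n)
    (hσX : ∀ i : Fin n, σ (XE k n i) = XE k n (Equiv.swap (fr n r hr) (fr1 n r hr) i))
    (hσω : ∀ i : Fin n, i ≠ fr n r hr → σ (wE k n i) = wE k n i)
    (hσωr : σ (wE k n (fr n r hr)) =
      wE k n (fr n r hr) + (XE k n (fr n r hr) - XE k n (fr1 n r hr)) * wE k n (fr1 n r hr))
    (D : EPol k n →ₗ[k] EPol k n)
    (hD : ∀ x : EPol k n, (XE k n (fr n r hr) - XE k n (fr1 n r hr)) * D x = x - σ x) :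
    ∀ x : EPol k n,
      D ((wE k n (fr n r hr) + XE k n (fr n r hr) * wE k n (fr1 n r hr)) * x) =
        (wE k n (fr n r hr) + XE k n (fr n r hr) * wE k n (fr1 n r hr)) * D x := by
  intro x
  set a := wE k n (fr n r hr) + XE k n (fr n r hr) * wE k n (fr1 n r hr) with ha
  set c := XE k n (fr n r hr) - XE k n (fr1 n r hr) with hc
  have hfr : fr n r hr ≠ fr1 n r hr := by
    simp [fr, fr1, Fin.ext_iff]
  -- σ fixes a
  have hσa : σ a = a := by
    have h1 : σ (wE k n (fr1 n r hr)) = wE k n (fr1 n r hr) := hσω _ (Ne.symm hfr)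
    rw [ha, map_add, map_mul, hσωr, hσX, h1, Equiv.swap_apply_left, hc, sub_mul, add_assoc, sub_add_cancel]
  -- c is central
  have hcomm : ∀ y : EPol k n, c * y = y * c := by
    intro y
    induction y using TensorProduct.induction_on with
    | zero => simp
    | tmul p m =>
      simp only [hc, XE, sub_mul, mul_sub, Algebra.TensorProduct.tmul_mul_tmul,
        one_mul, mul_one]
      rw [mul_comm, mul_comm (X (fr1 n r hr))]
    | add u v hu hv => rw [mul_add, add_mul, hu, hv]
  -- multiplication by c is injective
  set c' : MvPolynomial (Fin n) k := X (fr n r hr) - X (fr1 n r hr) with hc'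
  have hc'0 : c' ≠ 0 := by
    rw [hc', sub_ne_zero]
    intro h
    exact hfr (MvPolynomial.X_injective h)
  set L : EPol k n →ₗ[k] EPol k n :=
    LinearMap.rTensor (ExteriorAlgebra k (Fin n → k)) (LinearMap.mulLeft k c') with hL
  have hLc : ∀ y : EPol k n, c * y = L y := by
    intro y
    induction y using TensorProduct.induction_on with
    | zero => simp
    | tmul p m =>
      simp only [hL, hc, hc', XE, sub_mul, Algebra.TensorProduct.tmul_mul_tmul,
        one_mul, LinearMap.rTensor_tmul, LinearMap.mulLeft_apply, sub_mul,
        TensorProduct.sub_tmul]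
    | add u v hu hv => rw [mul_add, map_add, hu, hv]
  have hLinj : Function.Injective L :=
    Module.Flat.rTensor_preserves_injective_linearMap _
      (fun y z h => by
        have := mul_left_cancel₀ hc'0 h
        exact this)
  have hinj : ∀ u v : EPol k n, c * u = c * v → u = v := by
    intro u v h
    rw [hLc, hLc] at h
    exact hLinj h
  apply hinj
  rw [hD, map_mul, hσa, ← mul_assoc, hcomm a, mul_assoc, hD, mul_sub]
end
end

section
/- In End(EPol_n), let T_1 denote the extended Demazure operator ∂_1 and ω_1 left multiplication by ω_1. Then T_1 ω_1 T_1 ω_1 + ω_1 T_1 ω_1 T_1 = 0. -/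
open MvPolynomial
open scoped TensorProduct

noncomputable section

/-!
Write `δ = x₁ - x₂`, which is central and regular, so that `∂` is determined by
`δ ∂y = y - σy`; since `σδ = -δ` this also gives `δ σ(∂y) = σ²y - σy`. Multiplying
`∂ω∂ωx + ω∂ω∂x` by `δ²` and expanding expresses it through `ω`, `σω`, `σx` and `σ²x`.
As `ω² = (σω)² = 0` and `σ²ω = ω`, the sum collapses to `-(ω σω + σω ω) σ²x`, which vanishes
because `σω = ω + δω₂` and `ω`, `ω₂` anticommute.
-/

section TwistedDerivation

variable {A F : Type*} [Ring A] [FunLike F A A] [RingHomClass F A A] {σ : F} {δ : A}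

theorem mul_map_eq_of_mul_eq_sub {D : A → A} (hσδ : σ δ = -δ)
    (hD : ∀ y, δ * D y = y - σ y) (y : A) : δ * σ (D y) = σ (σ y) - σ y := by
  have h := congrArg σ (hD y)
  rw [map_mul, map_sub, hσδ, neg_mul] at h
  rw [← neg_sub, ← h, neg_neg]

theorem apply_mul_apply_mul_add_mul_apply_mul_apply {D : A → A} {a : A}
    (hδ : ∀ y, Commute δ y) (hreg : IsLeftRegular δ) (hσδ : σ δ = -δ)
    (hD : ∀ y, δ * D y = y - σ y) (hσσ : σ (σ a) = a) (ha : a * a = 0)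
    (hb : σ a * σ a = 0) (hab : a * σ a + σ a * a = 0) (x : A) :
    D (a * D (a * x)) + a * D (a * D x) = 0 := by
  have hDσ := mul_map_eq_of_mul_eq_sub hσδ hD
  have hL : ∀ y, δ * (a * y) = a * (δ * y) := (hδ a).left_comm
  have hR : ∀ y, δ * (σ a * y) = σ a * (δ * y) := (hδ (σ a)).left_comm
  have h₁ : δ * (δ * D (a * D (a * x))) = a * (a * x - σ a * σ x)
      - σ a * (a * σ (σ x) - σ a * σ x) := by
    rw [hD, mul_sub, hL, hD, map_mul σ a (D (a * x)), hR, hDσ, map_mul, map_mul, hσσ]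
  have h₂ : δ * (δ * (a * D (a * D x))) = a * (a * (x - σ x) - σ a * (σ (σ x) - σ x)) := by
    rw [hL, hL, hD, map_mul, mul_sub, hL, hR, hD, hDσ]
  apply (hreg.mul hreg)
  simp only [mul_assoc, mul_add, h₁, h₂, mul_zero]
  have hba : σ a * a = -(a * σ a) := eq_neg_of_add_eq_zero_right hab
  simp only [mul_sub, ← mul_assoc, ha, hb, hba, zero_mul, neg_mul]
  abel

end TwistedDerivation

section Perturbation

variable {A : Type*} [Ring A] {a c δ : A}

theorem add_mul_self_eq_zero_of_commute (hδa : Commute δ a) (hδc : Commute δ c)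
    (ha : a * a = 0) (hc : c * c = 0) (hac : a * c + c * a = 0) :
    (a + δ * c) * (a + δ * c) = 0 := by
  have hδac : a * (δ * c) = δ * (a * c) := (hδa.left_comm c).symm
  have hδcc : c * (δ * c) = δ * (c * c) := (hδc.left_comm c).symm
  simp only [add_mul, mul_add, mul_assoc, hδac, hδcc, ha, hc, mul_zero, zero_add, add_zero]
  rw [← mul_add, add_comm, hac, mul_zero]

theorem mul_add_mul_add_eq_zero_of_commute (hδa : Commute δ a) (ha : a * a = 0)
    (hac : a * c + c * a = 0) : a * (a + δ * c) + (a + δ * c) * a = 0 := by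
  have hδac : a * (δ * c) = δ * (a * c) := (hδa.left_comm c).symm
  simp only [add_mul, mul_add, mul_assoc, hδac, ha, zero_add]
  rw [← mul_add, hac, mul_zero]

theorem map_map_eq_of_map_eq_add_mul {F : Type*} [FunLike F A A] [RingHomClass F A A] {σ : F}
    (hσa : σ a = a + δ * c) (hσc : σ c = c) (hσδ : σ δ = -δ) : σ (σ a) = a := by
  rw [hσa, map_add, map_mul, hσa, hσc, hσδ]; noncomm_ring

end Perturbation

section EPol

variable {k : Type} [Field k] {n : ℕ}

theorem XE_sub_XE (i j : Fin n) :
    XE k n i - XE k n j = algebraMap (MvPolynomial (Fin n) k) (EPol k n) (X i - X j) := by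
  simp [XE, Algebra.TensorProduct.algebraMap_apply, TensorProduct.sub_tmul]

theorem isLeftRegular_XE_sub_XE {i j : Fin n} (hij : i ≠ j) :
    IsLeftRegular (XE k n i - XE k n j) := by
  rw [XE_sub_XE]
  refine IsSMulRegular.isLeftRegular ((isSMulRegular_algebraMap_iff _).mpr ?_)
  exact IsSMulRegular.of_ne_zero (sub_ne_zero.mpr (fun h => hij (X_injective h)))

theorem wE_mul_self (i : Fin n) : wE k n i * wE k n i = 0 := by
  simp [wE, Algebra.TensorProduct.tmul_mul_tmul]

theorem wE_mul_add_wE_mul (i j : Fin n) : wE k n i * wE k n j + wE k n j * wE k n i = 0 := by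
  simp only [wE, Algebra.TensorProduct.tmul_mul_tmul, one_mul]
  rw [← TensorProduct.tmul_add, ExteriorAlgebra.ι_add_mul_swap, TensorProduct.tmul_zero]

end EPol

/-- In `End(EPol_n)`, with `T_1 = ∂_1` the extended Demazure operator (sending `ω_1` to
`-ω_2` and `ω_i` to `0` for `i ≥ 2`) and `ω_1` left multiplication by `ω_1`:
`T_1 ω_1 T_1 ω_1 + ω_1 T_1 ω_1 T_1 = 0`. -/
theorem stmt_7 (k : Type) [Field k] (n : ℕ) (hn : 1 < n)
    (σ : EPol k n →ₐ[k] EPol k n)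
    (hσX : ∀ i : Fin n, σ (XE k n i) = XE k n (Equiv.swap (fr n 0 hn) (fr1 n 0 hn) i))
    (hσω : ∀ i : Fin n, i ≠ fr n 0 hn → σ (wE k n i) = wE k n i)
    (hσωr : σ (wE k n (fr n 0 hn)) =
      wE k n (fr n 0 hn) + (XE k n (fr n 0 hn) - XE k n (fr1 n 0 hn)) * wE k n (fr1 n 0 hn))
    (D : EPol k n →ₗ[k] EPol k n)
    (hD : ∀ x : EPol k n, (XE k n (fr n 0 hn) - XE k n (fr1 n 0 hn)) * D x = x - σ x) :
    ∀ x : EPol k n,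
      D (wE k n (fr n 0 hn) * D (wE k n (fr n 0 hn) * x)) +
        wE k n (fr n 0 hn) * D (wE k n (fr n 0 hn) * D x) = 0 := by
  set i := fr n 0 hn
  set j := fr1 n 0 hn
  have hij : i ≠ j := by simp [i, j, fr, fr1]
  have hδ : ∀ y, Commute (XE k n i - XE k n j) y := fun y => by
    rw [XE_sub_XE]; exact Algebra.commutes _ y
  have hσδ : σ (XE k n i - XE k n j) = -(XE k n i - XE k n j) := by
    rw [map_sub, hσX, hσX, Equiv.swap_apply_left, Equiv.swap_apply_right, neg_sub]
  have hσσ := map_map_eq_of_map_eq_add_mul hσωr (hσω j hij.symm) hσδ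
  have hb : σ (wE k n i) * σ (wE k n i) = 0 := by
    rw [hσωr]
    exact add_mul_self_eq_zero_of_commute (hδ _) (hδ _) (wE_mul_self i) (wE_mul_self j)
      (wE_mul_add_wE_mul i j)
  have hab : wE k n i * σ (wE k n i) + σ (wE k n i) * wE k n i = 0 := by
    rw [hσωr]
    exact mul_add_mul_add_eq_zero_of_commute (hδ _) (wE_mul_self i) (wE_mul_add_wE_mul i j)
  exact apply_mul_apply_mul_add_mul_apply_mul_apply hδ (isLeftRegular_XE_sub_XE hij) hσδ hD hσσ
    (wE_mul_self i) hb hab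
end
end

section
/- In End(EPol_n), the annihilation operators satisfy [T_r, ω_{r+1}^- - X_r ω_r^-] = 0, where T_r is the extended Demazure operator, X_r is multiplication by X_r, and ω_i^- are the annihilation operators. -/
open MvPolynomial
open scoped TensorProduct

set_option maxHeartbeats 1000000

noncomputable section

def PE (k : Type) [Field k] (n : ℕ) (P : MvPolynomial (Fin n) k) : EPol k n := P ⊗ₜ[k] 1

section Aux
variable (k : Type) [Field k] (n : ℕ)

lemma XE_eq_PE (i : Fin n) : XE k n i = PE k n (X i) := rfl

lemma PE_sub (p q : MvPolynomial (Fin n) k) : PE k n (p - q) = PE k n p - PE k n q := by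
  simp [PE, TensorProduct.sub_tmul]

lemma PE_comm (p : MvPolynomial (Fin n) k) (x : EPol k n) : PE k n p * x = x * PE k n p := by
  induction x using TensorProduct.induction_on with
  | zero => simp
  | tmul a b => simp [PE, Algebra.TensorProduct.tmul_mul_tmul, mul_comm]
  | add x y hx hy => rw [mul_add, add_mul, hx, hy]

lemma PE_mul_eq_rTensor (p : MvPolynomial (Fin n) k) (x : EPol k n) :
    PE k n p * x
      = LinearMap.rTensor (ExteriorAlgebra k (Fin n → k)) (LinearMap.mulLeft k p) x := by
  induction x using TensorProduct.induction_on with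
  | zero => simp
  | tmul a b => simp [PE, Algebra.TensorProduct.tmul_mul_tmul, LinearMap.rTensor_tmul]
  | add x y hx hy => simp [mul_add, hx, hy]

lemma PE_mul_injective (p : MvPolynomial (Fin n) k) (hp : p ≠ 0) :
    Function.Injective (fun x : EPol k n => PE k n p * x) := by
  have h1 : Function.Injective (LinearMap.mulLeft k p :
      MvPolynomial (Fin n) k →ₗ[k] MvPolynomial (Fin n) k) := by
    intro a b h
    exact mul_left_cancel₀ hp (by simpa using h)
  have h2 := Module.Flat.rTensor_preserves_injective_linearMap
      (M := ExteriorAlgebra k (Fin n → k)) (LinearMap.mulLeft k p) h1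
  intro a b h
  apply h2
  simpa only [← PE_mul_eq_rTensor] using h

lemma adjoin_top :
    Algebra.adjoin k (Set.range (XE k n) ∪ Set.range (wE k n)) = ⊤ := by
  rw [eq_top_iff]
  rintro x -
  induction x using TensorProduct.induction_on with
  | zero => exact Subalgebra.zero_mem _
  | add x y hx hy => exact add_mem hx hy
  | tmul a b =>
    have ha : (a ⊗ₜ[k] (1 : ExteriorAlgebra k (Fin n → k)) : EPol k n)
        ∈ Algebra.adjoin k (Set.range (XE k n) ∪ Set.range (wE k n)) := by
      induction a using MvPolynomial.induction_on with
      | C c =>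
        have : (C c ⊗ₜ[k] (1 : ExteriorAlgebra k (Fin n → k)) : EPol k n)
            = algebraMap k (EPol k n) c := by
          rw [Algebra.TensorProduct.algebraMap_apply]
          rfl
        rw [this]
        exact Subalgebra.algebraMap_mem _ c
      | add p q hp hq =>
        rw [TensorProduct.add_tmul]; exact add_mem hp hq
      | mul_X p i hp =>
        have : ((p * X i) ⊗ₜ[k] (1 : ExteriorAlgebra k (Fin n → k)) : EPol k n)
            = (p ⊗ₜ[k] 1) * (X i ⊗ₜ[k] 1) := by
          simp [Algebra.TensorProduct.tmul_mul_tmul]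
        rw [this]
        exact mul_mem hp (Algebra.subset_adjoin (Or.inl ⟨i, rfl⟩))
    have hb : ((1 : MvPolynomial (Fin n) k) ⊗ₜ[k] b : EPol k n)
        ∈ Algebra.adjoin k (Set.range (XE k n) ∪ Set.range (wE k n)) := by
      induction b using ExteriorAlgebra.induction with
      | algebraMap r =>
        have : ((1 : MvPolynomial (Fin n) k) ⊗ₜ[k]
            (algebraMap k (ExteriorAlgebra k (Fin n → k)) r) : EPol k n)
            = algebraMap k (EPol k n) r := by
          have h := (Algebra.TensorProduct.includeRight :
            ExteriorAlgebra k (Fin n → k) →ₐ[k] EPol k n).commutes r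
          rw [Algebra.TensorProduct.includeRight_apply] at h
          exact h
        rw [this]
        exact Subalgebra.algebraMap_mem _ r
      | ι m =>
        have hm : m = ∑ i, m i • (Pi.single i 1 : Fin n → k) := by
          conv_lhs => rw [← Finset.univ_sum_single m]
          refine Finset.sum_congr rfl fun i _ => ?_
          rw [← Pi.single_smul, smul_eq_mul, mul_one]
        have : ((1 : MvPolynomial (Fin n) k) ⊗ₜ[k]
            (ExteriorAlgebra.ι k m) : EPol k n) = ∑ i, m i • wE k n i := by
          conv_lhs => rw [hm]
          rw [map_sum, TensorProduct.tmul_sum]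
          refine Finset.sum_congr rfl fun i _ => ?_
          rw [map_smul, TensorProduct.tmul_smul]
          rfl
        rw [this]
        refine sum_mem fun i _ => Subalgebra.smul_mem _ ?_ _
        exact Algebra.subset_adjoin (Or.inr ⟨i, rfl⟩)
      | mul a b ha hb =>
        have : ((1 : MvPolynomial (Fin n) k) ⊗ₜ[k] (a * b) : EPol k n)
            = (1 ⊗ₜ[k] a) * (1 ⊗ₜ[k] b) := by
          simp [Algebra.TensorProduct.tmul_mul_tmul]
        rw [this]; exact mul_mem ha hb
      | add a b ha hb =>
        rw [TensorProduct.tmul_add]; exact add_mem ha hb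
    have : (a ⊗ₜ[k] b : EPol k n) = (a ⊗ₜ[k] 1) * ((1 : MvPolynomial (Fin n) k) ⊗ₜ[k] b) := by
      simp [Algebra.TensorProduct.tmul_mul_tmul]
    rw [this]
    exact mul_mem ha hb


lemma ep_mul_add (a b c : EPol k n) : a * (b + c) = a * b + a * c := mul_add a b c
lemma ep_add_mul (a b c : EPol k n) : (a + b) * c = a * c + b * c := add_mul a b c
lemma ep_mul_sub (a b c : EPol k n) : a * (b - c) = a * b - a * c := mul_sub a b c
lemma ep_sub_mul (a b c : EPol k n) : (a - b) * c = a * c - b * c := sub_mul a b c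
lemma ep_mul_assoc (a b c : EPol k n) : a * b * c = a * (b * c) := mul_assoc a b c
lemma ep_mul_neg (a b : EPol k n) : a * -b = -(a * b) := mul_neg a b
lemma ep_zero_mul (a : EPol k n) : (0 : EPol k n) * a = 0 := zero_mul a
lemma ep_mul_zero (a : EPol k n) : a * (0 : EPol k n) = 0 := mul_zero a
lemma ep_one_mul (a : EPol k n) : (1 : EPol k n) * a = a := one_mul a
lemma ep_mul_one (a : EPol k n) : a * (1 : EPol k n) = a := mul_one a

end Aux

/-- In `End(EPol_n)`, the annihilation operators satisfy
`[T_r, ω_{r+1}^- - X_r ω_r^-] = 0`, where `T_r = ∂_r` is the extended Demazure operator,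
`X_r` is multiplication by `X_r` and `ω_i^-` are the annihilation operators. -/
theorem stmt_9 (k : Type) [Field k] (n r : ℕ) (hr : r + 1 < n)
    (σ : EPol k n →ₐ[k] EPol k n)
    (hσX : ∀ i : Fin n, σ (XE k n i) = XE k n (Equiv.swap (fr n r hr) (fr1 n r hr) i))
    (hσω : ∀ i : Fin n, i ≠ fr n r hr → σ (wE k n i) = wE k n i)
    (hσωr : σ (wE k n (fr n r hr)) =
      wE k n (fr n r hr) + (XE k n (fr n r hr) - XE k n (fr1 n r hr)) * wE k n (fr1 n r hr))
    (D : EPol k n →ₗ[k] EPol k n)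
    (hD : ∀ x : EPol k n, (XE k n (fr n r hr) - XE k n (fr1 n r hr)) * D x = x - σ x)
    (ε : EPol k n →ₐ[k] EPol k n)
    (hεP : ∀ P : MvPolynomial (Fin n) k, ε (PE k n P) = PE k n P)
    (hεω : ∀ i : Fin n, ε (wE k n i) = - wE k n i)
    (A : Fin n → (EPol k n →ₗ[k] EPol k n))
    (hAder : ∀ (i : Fin n) (x y : EPol k n), A i (x * y) = A i x * y + ε x * A i y)
    (hAP : ∀ (i : Fin n) (P : MvPolynomial (Fin n) k), A i (PE k n P) = 0)
    (hAω : ∀ i j : Fin n, A i (wE k n j) = if i = j then 1 else 0) :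
    ∀ x : EPol k n,
      D (A (fr1 n r hr) x - XE k n (fr n r hr) * A (fr n r hr) x) =
        A (fr1 n r hr) (D x) - XE k n (fr n r hr) * A (fr n r hr) (D x) := by
  have hne : fr n r hr ≠ fr1 n r hr := by
    intro h
    have := congrArg Fin.val h
    simp [fr, fr1] at this
  have hσr0 : σ (XE k n (fr n r hr)) = XE k n (fr1 n r hr) := by
    rw [hσX, Equiv.swap_apply_left]
  have hδPE : XE k n (fr n r hr) - XE k n (fr1 n r hr)
      = PE k n (X (fr n r hr) - X (fr1 n r hr)) := by
    rw [PE_sub]; rfl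
  have hεδ : ε (XE k n (fr n r hr) - XE k n (fr1 n r hr))
      = XE k n (fr n r hr) - XE k n (fr1 n r hr) := by
    rw [hδPE, hεP]
  have hAδ : ∀ i, A i (XE k n (fr n r hr) - XE k n (fr1 n r hr)) = 0 := fun i => by
    rw [hδPE, hAP]
  have hA1 : ∀ (i : Fin n) (c : k), A i (algebraMap k (EPol k n) c) = 0 := by
    intro i c
    have h : algebraMap k (EPol k n) c = PE k n (MvPolynomial.C c) := by
      rw [Algebra.TensorProduct.algebraMap_apply]; rfl
    rw [h, hAP]
  have hAXE : ∀ i j, A i (XE k n j) = 0 := fun i j => by rw [XE_eq_PE, hAP]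
  have Xmc : ∀ (i : Fin n) (u v : EPol k n), XE k n i * (u * v) = u * (XE k n i * v) := by
    intro i u v
    rw [XE_eq_PE, ← ep_mul_assoc, PE_comm, ep_mul_assoc]
  have hA10 : A (fr1 n r hr) (wE k n (fr n r hr)) = 0 := by
    rw [hAω, if_neg (Ne.symm hne)]
  have hA11 : A (fr1 n r hr) (wE k n (fr1 n r hr)) = 1 := by rw [hAω, if_pos rfl]
  have hA00 : A (fr n r hr) (wE k n (fr n r hr)) = 1 := by rw [hAω, if_pos rfl]
  have hA01 : A (fr n r hr) (wE k n (fr1 n r hr)) = 0 := by rw [hAω, if_neg hne]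
  have hmem : ∀ x : EPol k n,
      x ∈ Algebra.adjoin k (Set.range (XE k n) ∪ Set.range (wE k n)) := by
    intro x; rw [adjoin_top]; trivial
  have szero : σ (0 : EPol k n) = 0 := map_zero σ
  have sone : σ (1 : EPol k n) = 1 := map_one σ
  -- ε and σ commute
  have hcomm : ∀ x : EPol k n, ε (σ x) = σ (ε x) := by
    intro x
    induction hmem x using Algebra.adjoin_induction with
    | mem y hy =>
      rcases hy with ⟨i, rfl⟩ | ⟨i, rfl⟩
      · have l : ε (σ (XE k n i)) = XE k n (Equiv.swap (fr n r hr) (fr1 n r hr) i) := by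
          rw [hσX, XE_eq_PE, hεP]
        have rr : σ (ε (XE k n i)) = XE k n (Equiv.swap (fr n r hr) (fr1 n r hr) i) := by
          rw [XE_eq_PE, hεP, ← XE_eq_PE, hσX]
        rw [l, rr]
      · by_cases h : i = fr n r hr
        · subst h
          have l : ε (σ (wE k n (fr n r hr)))
              = -(wE k n (fr n r hr))
                + (XE k n (fr n r hr) - XE k n (fr1 n r hr)) * -(wE k n (fr1 n r hr)) := by
            rw [hσωr, map_add, map_mul, hεδ, hεω, hεω]
          have rr : σ (ε (wE k n (fr n r hr)))
              = -(wE k n (fr n r hr)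
                + (XE k n (fr n r hr) - XE k n (fr1 n r hr)) * wE k n (fr1 n r hr)) := by
            rw [hεω, map_neg, hσωr]
          rw [l, rr, ep_mul_neg]
          abel
        · rw [hσω i h, hεω, map_neg, hσω i h]
    | algebraMap c => rw [AlgHom.commutes, AlgHom.commutes, AlgHom.commutes]
    | add u v _ _ hu hv => rw [map_add, map_add, map_add, map_add, hu, hv]
    | mul u v _ _ hu hv => rw [map_mul, map_mul, map_mul, map_mul, hu, hv]
  -- key intertwining identity
  have hQ : ∀ x : EPol k n,
      A (fr1 n r hr) (σ x) - XE k n (fr n r hr) * A (fr n r hr) (σ x)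
        = σ (A (fr1 n r hr) x) - XE k n (fr1 n r hr) * σ (A (fr n r hr) x) := by
    intro x
    induction hmem x using Algebra.adjoin_induction with
    | mem y hy =>
      rcases hy with ⟨i, rfl⟩ | ⟨i, rfl⟩
      · rw [hσX, hAXE, hAXE, hAXE, hAXE, map_zero, ep_mul_zero, ep_mul_zero]
      · by_cases h0 : i = fr n r hr
        · subst h0
          have e1 : A (fr1 n r hr) (σ (wE k n (fr n r hr)))
              = XE k n (fr n r hr) - XE k n (fr1 n r hr) := by
            rw [hσωr, map_add, hA10, hAder, hAδ, hεδ, hA11, ep_zero_mul, ep_mul_one,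
              zero_add, zero_add]
          have e2 : A (fr n r hr) (σ (wE k n (fr n r hr))) = 1 := by
            rw [hσωr, map_add, hA00, hAder, hAδ, hεδ, hA01, ep_zero_mul, ep_mul_zero,
              add_zero, add_zero]
          rw [e1, e2, hA10, hA00, szero, sone, ep_mul_one, ep_mul_one]
          abel
        · by_cases h1 : i = fr1 n r hr
          · subst h1
            rw [hσω _ (Ne.symm hne), hA11, hA01, sone, szero, ep_mul_zero, ep_mul_zero]
          · rw [hσω _ h0]
            have z1 : A (fr1 n r hr) (wE k n i) = 0 := by
              rw [hAω, if_neg (fun h => h1 h.symm)]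
            have z0 : A (fr n r hr) (wE k n i) = 0 := by
              rw [hAω, if_neg (fun h => h0 h.symm)]
            rw [z1, z0, szero, ep_mul_zero, ep_mul_zero]
    | algebraMap c =>
      rw [AlgHom.commutes, hA1, hA1, szero, ep_mul_zero, ep_mul_zero]
    | add u v _ _ hu hv =>
      calc A (fr1 n r hr) (σ (u + v)) - XE k n (fr n r hr) * A (fr n r hr) (σ (u + v))
          = (A (fr1 n r hr) (σ u) - XE k n (fr n r hr) * A (fr n r hr) (σ u))
            + (A (fr1 n r hr) (σ v) - XE k n (fr n r hr) * A (fr n r hr) (σ v)) := by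
            rw [map_add, map_add, map_add, ep_mul_add]; abel
        _ = (σ (A (fr1 n r hr) u) - XE k n (fr1 n r hr) * σ (A (fr n r hr) u))
            + (σ (A (fr1 n r hr) v) - XE k n (fr1 n r hr) * σ (A (fr n r hr) v)) := by
            rw [hu, hv]
        _ = σ (A (fr1 n r hr) (u + v)) - XE k n (fr1 n r hr) * σ (A (fr n r hr) (u + v)) := by
            rw [map_add, map_add, map_add, map_add, ep_mul_add]; abel
    | mul u v _ _ hu hv =>
      have c1 : XE k n (fr n r hr) * (ε (σ u) * A (fr n r hr) (σ v))
          = ε (σ u) * (XE k n (fr n r hr) * A (fr n r hr) (σ v)) := Xmc _ _ _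
      have c2 : XE k n (fr1 n r hr) * (ε (σ u) * σ (A (fr n r hr) v))
          = ε (σ u) * (XE k n (fr1 n r hr) * σ (A (fr n r hr) v)) := Xmc _ _ _
      calc A (fr1 n r hr) (σ (u * v)) - XE k n (fr n r hr) * A (fr n r hr) (σ (u * v))
          = (A (fr1 n r hr) (σ u) - XE k n (fr n r hr) * A (fr n r hr) (σ u)) * σ v
            + ε (σ u) * (A (fr1 n r hr) (σ v)
              - XE k n (fr n r hr) * A (fr n r hr) (σ v)) := by
            simp only [map_mul, hAder, ep_mul_add, ep_sub_mul, ep_mul_sub, ep_mul_assoc]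
            rw [c1]; abel
        _ = (σ (A (fr1 n r hr) u) - XE k n (fr1 n r hr) * σ (A (fr n r hr) u)) * σ v
            + ε (σ u) * (σ (A (fr1 n r hr) v)
              - XE k n (fr1 n r hr) * σ (A (fr n r hr) v)) := by rw [hu, hv]
        _ = σ (A (fr1 n r hr) (u * v))
            - XE k n (fr1 n r hr) * σ (A (fr n r hr) (u * v)) := by
            simp only [hAder, map_add, map_mul, ep_mul_add, ep_sub_mul, ep_mul_sub, ep_mul_assoc, ← hcomm]
            rw [c2]; abel
  -- A_i applied to the Demazure relation
  have hstar : ∀ (i : Fin n) (x : EPol k n),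
      (XE k n (fr n r hr) - XE k n (fr1 n r hr)) * A i (D x) = A i x - A i (σ x) := by
    intro i x
    have h := congrArg (A i) (hD x)
    rw [hAder, hAδ, hεδ, ep_zero_mul, zero_add, map_sub] at h
    exact h
  have hδc : ∀ u v : EPol k n,
      (XE k n (fr n r hr) - XE k n (fr1 n r hr)) * (u * v)
        = u * ((XE k n (fr n r hr) - XE k n (fr1 n r hr)) * v) := by
    intro u v
    rw [hδPE, ← ep_mul_assoc, PE_comm, ep_mul_assoc]
  intro x
  apply PE_mul_injective k n (X (fr n r hr) - X (fr1 n r hr))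
    (sub_ne_zero_of_ne fun h => hne (MvPolynomial.X_injective h))
  show PE k n (X (fr n r hr) - X (fr1 n r hr))
      * D (A (fr1 n r hr) x - XE k n (fr n r hr) * A (fr n r hr) x)
    = PE k n (X (fr n r hr) - X (fr1 n r hr))
      * (A (fr1 n r hr) (D x) - XE k n (fr n r hr) * A (fr n r hr) (D x))
  rw [← hδPE, hD]
  calc A (fr1 n r hr) x - XE k n (fr n r hr) * A (fr n r hr) x
        - σ (A (fr1 n r hr) x - XE k n (fr n r hr) * A (fr n r hr) x)
      = (A (fr1 n r hr) x - XE k n (fr n r hr) * A (fr n r hr) x)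
        - (σ (A (fr1 n r hr) x) - XE k n (fr1 n r hr) * σ (A (fr n r hr) x)) := by
        rw [map_sub, map_mul, hσr0]
    _ = (A (fr1 n r hr) x - XE k n (fr n r hr) * A (fr n r hr) x)
        - (A (fr1 n r hr) (σ x) - XE k n (fr n r hr) * A (fr n r hr) (σ x)) := by
        rw [hQ x]
    _ = (A (fr1 n r hr) x - A (fr1 n r hr) (σ x))
        - XE k n (fr n r hr) * (A (fr n r hr) x - A (fr n r hr) (σ x)) := by
        rw [ep_mul_sub]; abel
    _ = (XE k n (fr n r hr) - XE k n (fr1 n r hr))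
        * (A (fr1 n r hr) (D x) - XE k n (fr n r hr) * A (fr n r hr) (D x)) := by
        conv_rhs => rw [ep_mul_sub, hstar, hδc, hstar]
end
end

section
/- Define on families X = (X(μ))_{μ}, where X(μ) ∈ k(T_1,...,T_n) is indexed by subsets μ ⊆ [1;n] with |μ| = a, the star product (X ⋆ Y)(μ) = Σ_{μ = μ₁⊔μ₂, |μ₁|=a, |μ₂|=b} X(μ₁)Y(μ₂)/Q_{μ₁,μ₂}, where Q_{λ,ν} = Π_{i∈λ, j∈ν}(T_i - T_j). Then ⋆ is associative: (X ⋆ Y) ⋆ Z = X ⋆ (Y ⋆ Z). -/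
open MvPolynomial

noncomputable section

/-- The field of rational functions `k(T_1,...,T_n)`. -/
abbrev FracK (k : Type) [Field k] (n : ℕ) := FractionRing (MvPolynomial (Fin n) k)

/-- `Q_{λ,ν} = Π_{i∈λ, j∈ν} (T_i - T_j)`. -/
def QQ (k : Type) [Field k] (n : ℕ) (lam ν : Finset (Fin n)) : FracK k n :=
  ∏ i ∈ lam, ∏ j ∈ ν,
    (algebraMap (MvPolynomial (Fin n) k) (FracK k n) (X i) -
      algebraMap (MvPolynomial (Fin n) k) (FracK k n) (X j))

/-- The star product on families indexed by subsets of `[1;n]`: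
`(X ⋆ Y)(μ) = Σ_{μ = μ₁⊔μ₂, |μ₁|=a, |μ₂|=b} X(μ₁)Y(μ₂)/Q_{μ₁,μ₂}`. -/
def star (k : Type) [Field k] (n : ℕ) (a b : ℕ)
    (F G : Finset (Fin n) → FracK k n) : Finset (Fin n) → FracK k n :=
  fun μ => ∑ s ∈ μ.powerset.filter (fun s => s.card = a ∧ (μ \ s).card = b),
    F s * G (μ \ s) / QQ k n s (μ \ s)

lemma star_def (k : Type) [Field k] (n : ℕ) (a b : ℕ)
    (F G : Finset (Fin n) → FracK k n) (μ : Finset (Fin n)) :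
    star k n a b F G μ = ∑ s ∈ μ.powerset.filter (fun s => s.card = a ∧ (μ \ s).card = b),
      F s * G (μ \ s) / QQ k n s (μ \ s) := rfl

lemma QQ_union_left (k : Type) [Field k] (n : ℕ) (s t u : Finset (Fin n)) (h : Disjoint s t) :
    QQ k n (s ∪ t) u = QQ k n s u * QQ k n t u := Finset.prod_union h

lemma QQ_union_right (k : Type) [Field k] (n : ℕ) (s t u : Finset (Fin n)) (h : Disjoint t u) :
    QQ k n s (t ∪ u) = QQ k n s t * QQ k n s u := by
  unfold QQ
  rw [← Finset.prod_mul_distrib]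
  exact Finset.prod_congr rfl fun i _ => Finset.prod_union h

/-- The star product is associative: `(X ⋆ Y) ⋆ Z = X ⋆ (Y ⋆ Z)`. -/
theorem stmt_16 (k : Type) [Field k] (n : ℕ) (a b c : ℕ)
    (F G H : Finset (Fin n) → FracK k n) :
    star k n (a + b) c (star k n a b F G) H = star k n a (b + c) F (star k n b c G H) := by
  funext μ
  simp only [star_def, Finset.sum_div, Finset.sum_mul, Finset.mul_sum]
  rw [Finset.sum_sigma', Finset.sum_sigma']
  refine Finset.sum_nbij'
    (fun p => (⟨p.2, p.1 \ p.2⟩ : Σ _ : Finset (Fin n), Finset (Fin n)))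
    (fun p => (⟨p.1 ∪ p.2, p.1⟩ : Σ _ : Finset (Fin n), Finset (Fin n))) ?_ ?_ ?_ ?_ ?_
  · rintro ⟨s, t⟩ hp
    simp only [Finset.mem_sigma, Finset.mem_filter, Finset.mem_powerset] at hp ⊢
    obtain ⟨⟨hsμ, hsab, hμsc⟩, hts, hta, hstb⟩ := hp
    have htμ : t ⊆ μ := hts.trans hsμ
    have hst : (μ \ t) \ (s \ t) = μ \ s := by
      ext x
      simp only [Finset.mem_sdiff, not_and, not_not]
      have := @hts x
      have := @hsμ x
      constructor
      · rintro ⟨⟨hx, hxt⟩, h2⟩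
        exact ⟨hx, fun hxs => hxt (h2 hxs)⟩
      · rintro ⟨hx, hxs⟩
        exact ⟨⟨hx, fun hxt => hxs (hts hxt)⟩, fun hxs' => (hxs hxs').elim⟩
    have hcard : (μ \ t).card = b + c := by
      have h1 := Finset.card_sdiff_add_card_eq_card hsμ
      have h2 := Finset.card_sdiff_add_card_eq_card hts
      have h3 := Finset.card_sdiff_add_card_eq_card htμ
      omega
    refine ⟨⟨htμ, hta, hcard⟩, Finset.sdiff_subset_sdiff hsμ le_rfl, hstb, ?_⟩
    rw [hst]; exact hμsc
  · rintro ⟨s, t⟩ hp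
    simp only [Finset.mem_sigma, Finset.mem_filter, Finset.mem_powerset] at hp ⊢
    obtain ⟨⟨hsμ, hsa, hμsbc⟩, hts, htb, hstc⟩ := hp
    have hdisj : Disjoint s t := by
      refine Finset.disjoint_left.mpr fun x hxs hxt => ?_
      exact (Finset.mem_sdiff.mp (hts hxt)).2 hxs
    have hstμ : s ∪ t ⊆ μ := Finset.union_subset hsμ (hts.trans (Finset.sdiff_subset))
    have hμst : μ \ (s ∪ t) = (μ \ s) \ t := by
      ext x
      simp only [Finset.mem_sdiff, Finset.mem_union, not_or]
      tauto
    refine ⟨⟨hstμ, ?_, ?_⟩, Finset.subset_union_left, hsa, ?_⟩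
    · rw [Finset.card_union_of_disjoint hdisj, hsa, htb]
    · rw [hμst]; exact hstc
    · rw [Finset.union_sdiff_cancel_left hdisj]; exact htb
  · rintro ⟨s, t⟩ hp
    simp only [Finset.mem_sigma, Finset.mem_filter, Finset.mem_powerset] at hp
    obtain ⟨⟨hsμ, hsab, hμsc⟩, hts, hta, hstb⟩ := hp
    simp only [Finset.union_sdiff_of_subset hts]
  · rintro ⟨s, t⟩ hp
    simp only [Finset.mem_sigma, Finset.mem_filter, Finset.mem_powerset] at hp
    obtain ⟨⟨hsμ, hsa, hμsbc⟩, hts, htb, hstc⟩ := hp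
    have hdisj : Disjoint s t := by
      refine Finset.disjoint_left.mpr fun x hxs hxt => ?_
      exact (Finset.mem_sdiff.mp (hts hxt)).2 hxs
    simp only [Finset.union_sdiff_cancel_left hdisj]
  · rintro ⟨s, t⟩ hp
    simp only [Finset.mem_sigma, Finset.mem_filter, Finset.mem_powerset] at hp
    obtain ⟨⟨hsμ, hsab, hμsc⟩, hts, hta, hstb⟩ := hp
    have htμ : t ⊆ μ := hts.trans hsμ
    have hst : (μ \ t) \ (s \ t) = μ \ s := by
      ext x
      simp only [Finset.mem_sdiff, not_and, not_not]
      constructor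
      · rintro ⟨⟨hx, hxt⟩, h2⟩
        exact ⟨hx, fun hxs => hxt (h2 hxs)⟩
      · rintro ⟨hx, hxs⟩
        exact ⟨⟨hx, fun hxt => hxs (hts hxt)⟩, fun hxs' => (hxs hxs').elim⟩
    have hsplit : μ \ t = (s \ t) ∪ (μ \ s) := by
      ext x
      simp only [Finset.mem_sdiff, Finset.mem_union]
      constructor
      · rintro ⟨hx, hxt⟩
        by_cases hxs : x ∈ s
        · exact Or.inl ⟨hxs, hxt⟩
        · exact Or.inr ⟨hx, hxs⟩
      · rintro (⟨hxs, hxt⟩ | ⟨hx, hxs⟩)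
        · exact ⟨hsμ hxs, hxt⟩
        · exact ⟨hx, fun hxt => hxs (hts hxt)⟩
    have hdisj2 : Disjoint (s \ t) (μ \ s) := by
      refine Finset.disjoint_left.mpr fun x hx1 hx2 => ?_
      exact (Finset.mem_sdiff.mp hx2).2 (Finset.mem_sdiff.mp hx1).1
    have hsdecomp : s = t ∪ (s \ t) := (Finset.union_sdiff_of_subset hts).symm
    have hdisj3 : Disjoint t (s \ t) := Finset.disjoint_sdiff
    have e1 : QQ k n s (μ \ s) = QQ k n t (μ \ s) * QQ k n (s \ t) (μ \ s) := by
      calc QQ k n s (μ \ s) = QQ k n (t ∪ (s \ t)) (μ \ s) := by rw [← hsdecomp]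
        _ = _ := QQ_union_left k n t (s \ t) _ hdisj3
    have e2 : QQ k n t (μ \ t) = QQ k n t (s \ t) * QQ k n t (μ \ s) := by
      rw [hsplit]; exact QQ_union_right k n t _ _ hdisj2
    dsimp only
    rw [hst, e1, e2]
    simp only [div_eq_mul_inv, mul_inv]
    ring
end
end
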